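/- arXiv:2211.12447 — 6 statements merged into one kernel-verified Lean document; each statement's English description precedes it below -/
import Mathlib

section
/- Let n ≥ 1 and consider a properly 3-edge-colored complete binary tree of height n in the Boolean-list model, with edge coloring f and missing-at-the-root color c*. Then for every color c : Fin 3 and every i with 1 ≤ i ≤ n, the number γ(c,i) of c-colored edges at level i satisfies: γ(c,i) = ⌊2^i/3⌋ if (i is odd and c = c*) or (i is even and c ≠ c*), and γ(c,i) = ⌈2^i/3⌉ otherwise. -/
/-- The number of `c`-colored edges at level `i` of the complete binary tree of
height `n` in the Boolean-list model: a vertex is a Boolean list, and `f l` is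
the color of the edge joining a nonempty vertex `l` to its parent. -/
def levelColorCount (f : List Bool → Fin 3) (c : Fin 3) (i : ℕ) : ℕ :=
  (Finset.univ.filter fun v : Fin i → Bool => f (List.ofFn v) = c).card

lemma ofFn_snoc {i : ℕ} (w : Fin i → Bool) (b : Bool) :
    List.ofFn (Fin.snoc w b : Fin (i+1) → Bool) = List.ofFn w ++ [b] := by
  rw [List.ofFn_succ']
  simp [Fin.snoc_castSucc, List.concat_eq_append]

lemma count_step (f : List Bool → Fin 3) (c : Fin 3) (i : ℕ)
    (hsplit : ∀ w : Fin i → Bool,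
      ((if f (List.ofFn w ++ [false]) = c then 1 else 0) +
       (if f (List.ofFn w ++ [true]) = c then 1 else 0) : ℕ) =
      (if f (List.ofFn w) = c then 0 else 1)) :
    levelColorCount f c (i+1) + levelColorCount f c i = 2 ^ i := by
  unfold levelColorCount
  rw [Finset.card_filter, Finset.card_filter]
  rw [← Equiv.sum_comp (Fin.snocEquiv (fun _ : Fin (i+1) => Bool))
      (fun v => if f (List.ofFn v) = c then 1 else 0)]
  rw [Fintype.sum_prod_type_right]
  have : ∀ w : Fin i → Bool,
      (∑ b : Bool, if f (List.ofFn ((Fin.snocEquiv (fun _ : Fin (i+1) => Bool)) (b, w))) = c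
        then 1 else 0) = (if f (List.ofFn w) = c then (0:ℕ) else 1) := by
    intro w
    rw [Fintype.sum_bool]
    have h0 : ((Fin.snocEquiv (fun _ : Fin (i+1) => Bool)) (false, w)) =
        (Fin.snoc w false : Fin (i+1) → Bool) := rfl
    have h1 : ((Fin.snocEquiv (fun _ : Fin (i+1) => Bool)) (true, w)) =
        (Fin.snoc w true : Fin (i+1) → Bool) := rfl
    rw [h0, h1, ofFn_snoc, ofFn_snoc, Nat.add_comm]
    exact hsplit w
  rw [Finset.sum_congr rfl (fun w _ => this w), ← Finset.sum_add_distrib]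
  have : ∀ w : Fin i → Bool,
      ((if f (List.ofFn w) = c then (0:ℕ) else 1) +
       (if f (List.ofFn w) = c then (1:ℕ) else 0)) = 1 := by
    intro w; by_cases h : f (List.ofFn w) = c <;> simp [h]
  rw [Finset.sum_congr rfl (fun w _ => this w)]
  simp [Finset.card_univ]

lemma pow2_mod3 (i : ℕ) : 2 ^ i % 3 = if Even i then 1 else 2 := by
  induction i with
  | zero => simp
  | succ k ih =>
    rcases Nat.even_or_odd k with h | h
    · have : ¬ Even (k+1) := by simp [Nat.even_add_one, h]
      simp only [h, if_true] at ih
      simp only [this, if_false]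
      omega
    · have hk : ¬ Even k := Nat.not_even_iff_odd.mpr h
      have : Even (k+1) := Nat.even_add_one.mpr hk
      simp only [hk, if_false] at ih
      simp only [this, if_true]
      omega

lemma fin3_split : ∀ a b d c : Fin 3, a ≠ b → a ≠ d → b ≠ d →
    ((if b = c then (1:ℕ) else 0) + if d = c then 1 else 0) = if a = c then 0 else 1 := by
  decide

theorem binary_tree_level_color_count
    (n : ℕ) (hn : 1 ≤ n) (f : List Bool → Fin 3)
    (hroot : f [false] ≠ f [true])
    (hproper : ∀ l : List Bool, 1 ≤ l.length → l.length ≤ n - 1 →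
      f l ≠ f (l ++ [false]) ∧ f l ≠ f (l ++ [true]) ∧
        f (l ++ [false]) ≠ f (l ++ [true]))
    (cstar : Fin 3) (hc1 : cstar ≠ f [false]) (hc2 : cstar ≠ f [true]) :
    ∀ c : Fin 3, ∀ i : ℕ, 1 ≤ i → i ≤ n →
      levelColorCount f c i =
        if (Odd i ∧ c = cstar) ∨ (Even i ∧ c ≠ cstar)
          then 2 ^ i / 3
          else (2 ^ i + 2) / 3 := by
  intro c
  intro i h1
  induction i, h1 using Nat.le_induction with
  | base =>
    intro _
    have hb : levelColorCount f c 1 = if c = cstar then 0 else 1 := by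
      unfold levelColorCount
      rw [Finset.card_filter]
      rw [← Equiv.sum_comp (Equiv.funUnique (Fin 1) Bool).symm
        (fun v : Fin 1 → Bool => if f (List.ofFn v) = c then 1 else 0)]
      rw [Fintype.sum_bool]
      have h0 : List.ofFn ((Equiv.funUnique (Fin 1) Bool).symm false) = [false] := rfl
      have h1 : List.ofFn ((Equiv.funUnique (Fin 1) Bool).symm true) = [true] := rfl
      rw [h0, h1]
      revert hroot hc1 hc2
      generalize f [false] = a
      generalize f [true] = b
      revert a b c cstar
      decide
    rw [hb]
    have : ((Odd 1 ∧ c = cstar) ∨ (Even 1 ∧ c ≠ cstar)) ↔ c = cstar := by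
      simp [Nat.odd_iff, Nat.even_iff]
    rw [if_congr this rfl rfl]
    by_cases h : c = cstar <;> simp [h]
  | succ k hk ih =>
    intro hkn
    have hkn' : k ≤ n := Nat.le_of_succ_le hkn
    have ihv := ih hkn'
    have hstep : levelColorCount f c (k+1) + levelColorCount f c k = 2 ^ k := by
      apply count_step
      intro w
      have hlen : (List.ofFn w).length = k := by simp
      have hp := hproper (List.ofFn w) (by omega) (by omega)
      exact fin3_split _ _ _ c hp.1 hp.2.1 hp.2.2
    have hm : 2 ^ k % 3 = 1 ∨ 2 ^ k % 3 = 2 := by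
      rcases Nat.even_or_odd k with h | h
      · left; simpa [h] using pow2_mod3 k
      · right; simpa [Nat.not_even_iff_odd.mpr h] using pow2_mod3 k
    have hpow : 2 ^ (k+1) = 2 * 2 ^ k := by ring
    have hflip : ((Odd (k+1) ∧ c = cstar) ∨ (Even (k+1) ∧ c ≠ cstar)) ↔
        ¬ ((Odd k ∧ c = cstar) ∨ (Even k ∧ c ≠ cstar)) := by
      by_cases hc : c = cstar <;>
        simp [hc, Nat.odd_iff, Nat.even_iff] <;> omega
    by_cases hck : (Odd k ∧ c = cstar) ∨ (Even k ∧ c ≠ cstar)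
    · rw [if_pos hck] at ihv
      rw [if_neg (fun h => (hflip.mp h) hck)]
      omega
    · rw [if_neg hck] at ihv
      rw [if_pos (hflip.mpr hck)]
      omega
end

section
/- Let n ≥ 1 and consider a properly 3-edge-colored complete binary tree of height n in the Boolean-list model, with edge coloring f. Let 1 ≤ j ≤ n and let t : Fin j → Fin 3 be a color sequence whose consecutive entries are distinct (equivalently, a sequence containing no even-length palindrome). Then the number of Boolean lists v of length n (leaves) such that f (v.take (n − k)) = t k for every k < j — i.e., the colors of the first j edges on the upward path from v toward the root spell out t — is at most ⌈2^{n−j+1}/3⌉. -/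
theorem myOfFn_snoc {α : Type*} {m : ℕ} (q : Fin m → α) (b : α) :
    List.ofFn (Fin.snoc q b) = List.ofFn q ++ [b] := by
  rw [List.ofFn_succ']
  simp [List.concat_eq_append]

theorem myTake_succ {α : Type*} {n ℓ : ℕ} (v : Fin n → α) (h : ℓ < n) :
    (List.ofFn v).take (ℓ + 1) = (List.ofFn v).take ℓ ++ [v ⟨ℓ, h⟩] := by
  rw [← Fin.ofFn_take_eq_take_ofFn h.le, ← Fin.ofFn_take_eq_take_ofFn h,
    Fin.take_succ_eq_snoc, myOfFn_snoc]

theorem myCount (n : ℕ) (f : List Bool → Fin 3)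
    (hroot : f [false] ≠ f [true])
    (hproper : ∀ l : List Bool, 1 ≤ l.length → l.length ≤ n - 1 →
      f l ≠ f (l ++ [false]) ∧ f l ≠ f (l ++ [true]) ∧
        f (l ++ [false]) ≠ f (l ++ [true]))
    (m : ℕ) (hm1 : 1 ≤ m) (hmn : m ≤ n) (c : Fin 3) :
    3 * (Finset.univ.filter fun p : Fin m → Bool => f (List.ofFn p) = c).card ≤ 2 ^ m + 2 ∧
      2 ^ m ≤ 3 * (Finset.univ.filter fun p : Fin m → Bool => f (List.ofFn p) = c).card + 2 := by
  induction m, hm1 using Nat.le_induction generalizing c with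
  | base =>
      have h1 : (Finset.univ.filter fun p : Fin 1 → Bool => f (List.ofFn p) = c).card ≤ 1 := by
        apply Finset.card_le_one.2
        intro p hp q hq
        simp only [Finset.mem_filter, Finset.mem_univ, true_and] at hp hq
        by_contra hpq
        have hb : p 0 ≠ q 0 := by
          intro h
          exact hpq (funext fun i => by rw [Subsingleton.elim i 0, h])
        have hofp : List.ofFn p = [p 0] := by simp [List.ofFn_succ]
        have hofq : List.ofFn q = [q 0] := by simp [List.ofFn_succ]
        rw [hofp] at hp; rw [hofq] at hq
        rcases Bool.eq_false_or_eq_true (p 0) with h1' | h1' <;>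
          rcases Bool.eq_false_or_eq_true (q 0) with h2' | h2' <;>
            rw [h1'] at hp <;> rw [h2'] at hq
        · exact hb (h1'.trans h2'.symm)
        · exact hroot (hq.trans hp.symm)
        · exact hroot (hp.trans hq.symm)
        · exact hb (h1'.trans h2'.symm)
      omega
  | succ m hm ih =>
      have hmn' : m ≤ n := by omega
      have ihc := ih hmn'
      have hlen : ∀ q : Fin m → Bool, (List.ofFn q).length = m := fun q => by simp
      have hprop : ∀ q : Fin m → Bool,
          f (List.ofFn q) ≠ f (List.ofFn q ++ [false]) ∧
          f (List.ofFn q) ≠ f (List.ofFn q ++ [true]) ∧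
          f (List.ofFn q ++ [false]) ≠ f (List.ofFn q ++ [true]) := fun q =>
        hproper _ (by rw [hlen]; omega) (by rw [hlen]; omega)
      have key : (Finset.univ.filter fun p : Fin (m+1) → Bool => f (List.ofFn p) = c).card =
          (Finset.univ.filter fun q : Fin m → Bool => ¬ f (List.ofFn q) = c).card := by
        apply Finset.card_bij (fun p _ => Fin.init p)
        · intro p hp
          simp only [Finset.mem_filter, Finset.mem_univ, true_and] at hp ⊢
          have hsnoc : List.ofFn p = List.ofFn (Fin.init p) ++ [p (Fin.last m)] := by
            rw [← myOfFn_snoc, Fin.snoc_init_self]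
          rw [hsnoc] at hp
          rcases Bool.eq_false_or_eq_true (p (Fin.last m)) with h' | h' <;> rw [h'] at hp
          · exact fun hc => (hprop (Fin.init p)).2.1 (hc.trans hp.symm)
          · exact fun hc => (hprop (Fin.init p)).1 (hc.trans hp.symm)
        · intro p hp p' hp' hi
          simp only [Finset.mem_filter, Finset.mem_univ, true_and] at hp hp'
          have hs : List.ofFn p = List.ofFn (Fin.init p) ++ [p (Fin.last m)] := by
            rw [← myOfFn_snoc, Fin.snoc_init_self]
          have hs' : List.ofFn p' = List.ofFn (Fin.init p') ++ [p' (Fin.last m)] := by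
            rw [← myOfFn_snoc, Fin.snoc_init_self]
          rw [hs] at hp; rw [hs', ← hi] at hp'
          have hlast : p (Fin.last m) = p' (Fin.last m) := by
            by_contra hb
            rcases Bool.eq_false_or_eq_true (p (Fin.last m)) with h' | h' <;>
              rcases Bool.eq_false_or_eq_true (p' (Fin.last m)) with h2' | h2' <;>
                rw [h'] at hp <;> rw [h2'] at hp'
            · exact hb (h'.trans h2'.symm)
            · exact (hprop (Fin.init p)).2.2 (hp'.trans hp.symm)
            · exact (hprop (Fin.init p)).2.2 (hp.trans hp'.symm)
            · exact hb (h'.trans h2'.symm)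
          rw [← Fin.snoc_init_self p, ← Fin.snoc_init_self p', hi, hlast]
        · intro q hq
          simp only [Finset.mem_filter, Finset.mem_univ, true_and] at hq
          have h3 : ∀ a d0 d1 c : Fin 3, a ≠ d0 → a ≠ d1 → d0 ≠ d1 → a ≠ c →
              c = d0 ∨ c = d1 := by decide
          obtain ⟨hq0, hq1, hq01⟩ := hprop q
          rcases h3 _ _ _ c hq0 hq1 hq01 hq with hcc | hcc
          · refine ⟨Fin.snoc q false, ?_, ?_⟩
            · simp only [Finset.mem_filter, Finset.mem_univ, true_and, myOfFn_snoc]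
              exact hcc.symm
            · exact Fin.init_snoc _ _
          · refine ⟨Fin.snoc q true, ?_, ?_⟩
            · simp only [Finset.mem_filter, Finset.mem_univ, true_and, myOfFn_snoc]
              exact hcc.symm
            · exact Fin.init_snoc _ _
      have hsplit : (Finset.univ.filter fun q : Fin m → Bool => f (List.ofFn q) = c).card +
          (Finset.univ.filter fun q : Fin m → Bool => ¬ f (List.ofFn q) = c).card = 2 ^ m := by
        rw [Finset.card_filter_add_card_filter_not, Finset.card_univ]
        simp
      obtain ⟨ih1, ih2⟩ := ihc c
      constructor
      · rw [key]
        have : 2 ^ (m + 1) = 2 ^ m + 2 ^ m := by ring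
        omega
      · rw [key]
        have : 2 ^ (m + 1) = 2 ^ m + 2 ^ m := by ring
        omega
theorem binary_tree_leaves_with_prescribed_upward_colors
    (n : ℕ) (hn : 1 ≤ n) (f : List Bool → Fin 3)
    (hroot : f [false] ≠ f [true])
    (hproper : ∀ l : List Bool, 1 ≤ l.length → l.length ≤ n - 1 →
      f l ≠ f (l ++ [false]) ∧ f l ≠ f (l ++ [true]) ∧
        f (l ++ [false]) ≠ f (l ++ [true]))
    (j : ℕ) (hj1 : 1 ≤ j) (hjn : j ≤ n)
    (t : Fin j → Fin 3)
    (ht : ∀ k : ℕ, ∀ h : k + 1 < j,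
      t ⟨k, Nat.lt_of_succ_lt h⟩ ≠ t ⟨k + 1, h⟩) :
    (Finset.univ.filter fun v : Fin n → Bool =>
        ∀ k : Fin j, f ((List.ofFn v).take (n - (k : ℕ))) = t k).card ≤
      (2 ^ (n - j + 1) + 2) / 3 := by
  set m := n - j + 1 with hm_def
  have hm1 : 1 ≤ m := by omega
  have hmn : m ≤ n := by omega
  set c := t ⟨j - 1, by omega⟩ with hc_def
  -- step 1: the filtered set injects into length-m prefixes with color c
  have hinj : (Finset.univ.filter fun v : Fin n → Bool =>
        ∀ k : Fin j, f ((List.ofFn v).take (n - (k : ℕ))) = t k).card ≤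
      (Finset.univ.filter fun p : Fin m → Bool => f (List.ofFn p) = c).card := by
    apply Finset.card_le_card_of_injOn (fun v => Fin.take m hmn v)
    · intro v hv
      simp only [Finset.mem_coe, Finset.mem_filter, Finset.mem_univ, true_and] at hv ⊢
      rw [Fin.ofFn_take_eq_take_ofFn]
      have h1 := hv ⟨j - 1, by omega⟩
      have h2 : n - (j - 1) = m := by omega
      rw [h2] at h1
      exact h1
    · intro v hv w hw hvw
      simp only [Finset.mem_coe, Finset.mem_filter, Finset.mem_univ, true_and] at hv hw
      have hbase : (List.ofFn v).take m = (List.ofFn w).take m := by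
        rw [← Fin.ofFn_take_eq_take_ofFn hmn v, ← Fin.ofFn_take_eq_take_ofFn hmn w]
        exact congrArg List.ofFn hvw
      have claim : ∀ ℓ, m ≤ ℓ → ℓ ≤ n →
          (List.ofFn v).take ℓ = (List.ofFn w).take ℓ := by
        intro ℓ hℓ
        induction ℓ, hℓ using Nat.le_induction with
        | base => intro _; exact hbase
        | succ ℓ hℓ ih =>
          intro hℓn
          have hlt : ℓ < n := by omega
          have hq := ih (by omega)
          rw [myTake_succ v hlt, myTake_succ w hlt, hq]
          suffices hvw' : v ⟨ℓ, hlt⟩ = w ⟨ℓ, hlt⟩ by rw [hvw']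
          by_contra hb
          have hqlen : ((List.ofFn w).take ℓ).length = ℓ := by
            simp [Nat.min_eq_left hlt.le]
          obtain ⟨_, _, hsib⟩ := hproper ((List.ofFn w).take ℓ)
            (by omega) (by omega)
          have hk : n - ℓ - 1 < j := by omega
          have hv' := hv ⟨n - ℓ - 1, hk⟩
          have hw' := hw ⟨n - ℓ - 1, hk⟩
          have hnk : n - (n - ℓ - 1) = ℓ + 1 := by omega
          rw [hnk] at hv' hw'
          have heq : f ((List.ofFn w).take ℓ ++ [v ⟨ℓ, hlt⟩]) =
              f ((List.ofFn w).take ℓ ++ [w ⟨ℓ, hlt⟩]) := by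
            rw [← myTake_succ w hlt, ← hq, ← myTake_succ v hlt, hv', hw']
          rcases Bool.eq_false_or_eq_true (v ⟨ℓ, hlt⟩) with h1 | h1 <;>
            rcases Bool.eq_false_or_eq_true (w ⟨ℓ, hlt⟩) with h2 | h2 <;>
              rw [h1, h2] at heq
          · exact hb (h1.trans h2.symm)
          · exact hsib heq.symm
          · exact hsib heq
          · exact hb (h1.trans h2.symm)
      have hfull := claim n hmn le_rfl
      rw [List.take_of_length_le (by simp), List.take_of_length_le (by simp)] at hfull
      exact List.ofFn_injective hfull
  refine hinj.trans ?_
  have hcount := (myCount n f hroot hproper m hm1 hmn c).1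
  rw [Nat.le_div_iff_mul_le (by norm_num)]
  omega
end

section
/- In the good/bad/ugly setting, for every i with 0 ≤ i ≤ m one has ‖good^i‖² + Σ_{j=1}^{i} ‖bad^j‖² = 1. -/
/-!
The orthogonal projection splits `C i (good (i - 1))`, a vector of norm `‖good (i - 1)‖`, into
the orthogonal pieces `good i` and `bad i`; by Pythagoras the norm squared lost by `good` at step
`i` is exactly `‖bad i‖ ^ 2`, and telescoping from `‖good 0‖ = ‖ψ0‖ = 1` gives the identity.
-/

theorem norm_sub_sq_add_norm_sq_of_idempotent_of_symm {𝕜 E : Type*} [RCLike 𝕜]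
    [NormedAddCommGroup E] [InnerProductSpace 𝕜 E] (P : E →ₗ[𝕜] E)
    (hPidem : ∀ x, P (P x) = P x) (hPsa : ∀ x y, inner 𝕜 (P x) y = inner 𝕜 x (P y)) (x : E) :
    ‖x - P x‖ ^ 2 + ‖P x‖ ^ 2 = ‖x‖ ^ 2 := by
  have horth : inner 𝕜 (P x) (x - P x) = 0 := by
    rw [hPsa, map_sub, hPidem, sub_self, inner_zero_right]
  have := norm_add_sq_eq_norm_sq_add_norm_sq_of_inner_eq_zero (P x) (x - P x) horth
  rw [add_sub_cancel] at this
  linear_combination -this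

theorem add_sum_Icc_eq_of_add_succ_eq {M : Type*} [AddCommMonoid M] (a b : ℕ → M) (m : ℕ)
    (hstep : ∀ n < m, a (n + 1) + b (n + 1) = a n) :
    ∀ i ≤ m, a i + ∑ j ∈ Finset.Icc 1 i, b j = a 0 := by
  intro i
  induction i with
  | zero => simp
  | succ n ih =>
    intro hle
    rw [Finset.sum_Icc_succ_top (Nat.le_add_left 1 n), add_left_comm, hstep n hle, add_comm,
      ih (by omega)]

theorem welded_tree_good_sq_add_bad_sq_eq_one
    {{H : Type*}} [NormedAddCommGroup H] [InnerProductSpace ℂ H]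
    (m : ℕ) (C : ℕ → (H ≃ₗᵢ[ℂ] H))
    (P : H →L[ℂ] H)
    (hPidem : ∀ x : H, P (P x) = P x)
    (hPsa : ∀ x y : H, (inner ℂ (P x) y : ℂ) = inner ℂ x (P y))
    (ψ0 : H) (hψ0 : ‖ψ0‖ = 1) (hψ0bad : P ψ0 = 0)
    (A good bad ugly : ℕ → H)
    (hA0 : A 0 = ψ0)
    (hA : ∀ i : ℕ, 1 ≤ i → i ≤ m → A i = C i (A (i - 1)))
    (hgood0 : good 0 = ψ0) (hbad0 : bad 0 = 0) (hugly0 : ugly 0 = 0)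
    (hgood : ∀ i : ℕ, 1 ≤ i → i ≤ m →
      good i = C i (good (i - 1)) - P (C i (good (i - 1))))
    (hbad : ∀ i : ℕ, 1 ≤ i → i ≤ m → bad i = P (C i (good (i - 1))))
    (hugly : ∀ i : ℕ, 1 ≤ i → i ≤ m → ugly i = bad i + C i (ugly (i - 1))) :
    ∀ i : ℕ, i ≤ m → ‖good i‖ ^ 2 + ∑ j ∈ Finset.Icc 1 i, ‖bad j‖ ^ 2 = 1 := by
  have hstep : ∀ n < m, ‖good (n + 1)‖ ^ 2 + ‖bad (n + 1)‖ ^ 2 = ‖good n‖ ^ 2 := by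
    intro n hn
    rw [hgood (n + 1) n.succ_pos hn, hbad (n + 1) n.succ_pos hn, Nat.add_sub_cancel,
      ← (C (n + 1)).norm_map (good n)]
    exact norm_sub_sq_add_norm_sq_of_idempotent_of_symm P.toLinearMap hPidem hPsa _
  simpa [hgood0, hψ0] using add_sum_Icc_eq_of_add_succ_eq (‖good ·‖ ^ 2) (‖bad ·‖ ^ 2) m hstep
end

section
/- In the good/bad/ugly setting, for every i with 0 ≤ i ≤ m one has ‖ugly^i‖ ≤ Σ_{j=1}^{i} ‖Π_bad A^j‖. In particular, if ε ≥ 0 and ‖Π_bad A^j‖ ≤ ε for all 1 ≤ j ≤ i, then ‖ugly^i‖ ≤ i·ε. -/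
/-!
Since `A i` is obtained from `ψ0` by the same gates, `A i = good i + ugly i` for every `i`.
Hence the new ugly part `P (C i good) + C i ugly` equals `P (A i) + (1 - P) (C i ugly)`, and since
`1 - P` is an orthogonal projection and `C i` is unitary, each gate adds at most `‖P (A i)‖` to the
norm of the ugly part.
-/

open Finset

section GoodBadUgly

variable {𝕜 H F : Type*} [RCLike 𝕜] [NormedAddCommGroup H] [InnerProductSpace 𝕜 H]

theorem norm_sub_apply_le_of_isSymmetric_of_idempotent {P : H →ₗ[𝕜] H} (hsymm : P.IsSymmetric)
    (hidem : ∀ x, P (P x) = P x) (x : H) : ‖x - P x‖ ≤ ‖x‖ := by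
  have horth : inner 𝕜 (P x) (x - P x) = 0 := by
    rw [hsymm, map_sub, hidem, sub_self, inner_zero_right]
  have hpyth := norm_add_sq_eq_norm_sq_add_norm_sq_of_inner_eq_zero _ _ horth
  rw [add_sub_cancel] at hpyth
  nlinarith [norm_nonneg (P x), norm_nonneg (x - P x), norm_nonneg x]

theorem norm_apply_add_le_of_isSymmetric_of_idempotent [FunLike F H H]
    [LinearIsometryClass F 𝕜 H H] {P : H →ₗ[𝕜] H} (hsymm : P.IsSymmetric)
    (hidem : ∀ x, P (P x) = P x) (U : F) (g u : H) :
    ‖P (U g) + U u‖ ≤ ‖P (U (g + u))‖ + ‖u‖ :=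
  calc ‖P (U g) + U u‖ = ‖P (U (g + u)) + (U u - P (U u))‖ := by
        rw [map_add, map_add]; abel_nf
    _ ≤ ‖P (U (g + u))‖ + ‖U u - P (U u)‖ := norm_add_le _ _
    _ ≤ ‖P (U (g + u))‖ + ‖u‖ := by
        gcongr
        exact (norm_sub_apply_le_of_isSymmetric_of_idempotent hsymm hidem _).trans_eq
          (SemilinearIsometryClass.norm_map U u)

variable [FunLike F H H] {P : H →ₗ[𝕜] H} {U : ℕ → F} {m : ℕ}
  {A good ugly : ℕ → H}

theorem eq_good_add_ugly [LinearMapClass F 𝕜 H H] (h0 : A 0 = good 0 + ugly 0)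
    (hA : ∀ i < m, A (i + 1) = U (i + 1) (A i))
    (hgood : ∀ i < m, good (i + 1) = U (i + 1) (good i) - P (U (i + 1) (good i)))
    (hugly : ∀ i < m, ugly (i + 1) = P (U (i + 1) (good i)) + U (i + 1) (ugly i)) :
    ∀ i ≤ m, A i = good i + ugly i := by
  intro i hi
  induction i with
  | zero => exact h0
  | succ i ih =>
    rw [hA i hi, ih (by omega), map_add, hgood i hi, hugly i hi]
    abel

theorem norm_ugly_le_sum_norm_apply [LinearIsometryClass F 𝕜 H H] (hsymm : P.IsSymmetric)
    (hidem : ∀ x, P (P x) = P x) (h0 : ugly 0 = 0) (hA : ∀ i < m, A (i + 1) = U (i + 1) (A i))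
    (hdecomp : ∀ i ≤ m, A i = good i + ugly i)
    (hugly : ∀ i < m, ugly (i + 1) = P (U (i + 1) (good i)) + U (i + 1) (ugly i)) :
    ∀ i ≤ m, ‖ugly i‖ ≤ ∑ j ∈ Icc 1 i, ‖P (A j)‖ := by
  intro i hi
  induction i with
  | zero => simp [h0]
  | succ i ih =>
    calc ‖ugly (i + 1)‖ ≤ ‖P (A (i + 1))‖ + ‖ugly i‖ := by
          rw [hugly i hi, hA i hi, hdecomp i (by omega)]
          exact norm_apply_add_le_of_isSymmetric_of_idempotent hsymm hidem _ _ _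
      _ ≤ ‖P (A (i + 1))‖ + ∑ j ∈ Icc 1 i, ‖P (A j)‖ := by grw [ih (by omega)]
      _ = ∑ j ∈ Icc 1 (i + 1), ‖P (A j)‖ := by rw [sum_Icc_succ_top (by omega), add_comm]

end GoodBadUgly

theorem welded_tree_ugly_le_sum_proj_bad_A
    {{H : Type*}} [NormedAddCommGroup H] [InnerProductSpace ℂ H]
    (m : ℕ) (C : ℕ → (H ≃ₗᵢ[ℂ] H))
    (P : H →L[ℂ] H)
    (hPidem : ∀ x : H, P (P x) = P x)
    (hPsa : ∀ x y : H, (inner ℂ (P x) y : ℂ) = inner ℂ x (P y))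
    (ψ0 : H) (hψ0 : ‖ψ0‖ = 1) (hψ0bad : P ψ0 = 0)
    (A good bad ugly : ℕ → H)
    (hA0 : A 0 = ψ0)
    (hA : ∀ i : ℕ, 1 ≤ i → i ≤ m → A i = C i (A (i - 1)))
    (hgood0 : good 0 = ψ0) (hbad0 : bad 0 = 0) (hugly0 : ugly 0 = 0)
    (hgood : ∀ i : ℕ, 1 ≤ i → i ≤ m →
      good i = C i (good (i - 1)) - P (C i (good (i - 1))))
    (hbad : ∀ i : ℕ, 1 ≤ i → i ≤ m → bad i = P (C i (good (i - 1))))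
    (hugly : ∀ i : ℕ, 1 ≤ i → i ≤ m → ugly i = bad i + C i (ugly (i - 1))) :
    ∀ i : ℕ, i ≤ m →
      ‖ugly i‖ ≤ ∑ j ∈ Finset.Icc 1 i, ‖P (A j)‖ ∧
      ∀ ε : ℝ, 0 ≤ ε → (∀ j : ℕ, 1 ≤ j → j ≤ i → ‖P (A j)‖ ≤ ε) →
        ‖ugly i‖ ≤ (i : ℝ) * ε := by
  have hA' : ∀ i < m, A (i + 1) = C (i + 1) (A i) := fun i hi => hA (i + 1) (by omega) hi
  have hgood' : ∀ i < m, good (i + 1) = C (i + 1) (good i) - P (C (i + 1) (good i)) :=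
    fun i hi => hgood (i + 1) (by omega) hi
  have hugly' : ∀ i < m, ugly (i + 1) = P (C (i + 1) (good i)) + C (i + 1) (ugly i) :=
    fun i hi => by rw [hugly (i + 1) (by omega) hi, hbad (i + 1) (by omega) hi]; rfl
  have hdecomp := eq_good_add_ugly (P := (P : H →ₗ[ℂ] H)) (by rw [hA0, hgood0, hugly0, add_zero])
    hA' hgood' hugly'
  have hbound := norm_ugly_le_sum_norm_apply (P := (P : H →ₗ[ℂ] H)) hPsa hPidem hugly0 hA'
    hdecomp hugly'
  intro i hi
  refine ⟨hbound i hi, fun ε _ hε => (hbound i hi).trans ?_⟩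
  calc ∑ j ∈ Icc 1 i, ‖P (A j)‖ ≤ #(Icc 1 i) • ε :=
        sum_le_card_nsmul _ _ _ fun j hj => hε j (mem_Icc.1 hj).1 (mem_Icc.1 hj).2
    _ = i * ε := by simp
end

section
/- In the good/bad/ugly setting, for every i with 0 ≤ i ≤ m one has ‖ugly^i‖ ≤ Σ_{j=1}^{i} ‖bad^j‖ and ‖ugly^i‖² ≤ i · (1 − ‖good^i‖²). -/
/-!
Each step splits `C i good^{i-1}`, a vector of norm `‖good^{i-1}‖`, orthogonally into
`good^i + bad^i`, so `‖good^i‖² + Σ_{j ≤ i} ‖bad^j‖² = ‖ψ0‖² = 1`. Since the `C_i` are isometries,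
the triangle inequality gives `‖ugly^i‖ ≤ Σ_{j ≤ i} ‖bad^j‖`, and Cauchy–Schwarz turns the square
of this sum into at most `i · Σ_{j ≤ i} ‖bad^j‖² = i (1 - ‖good^i‖²)`.
-/

open Finset

section Telescoping

variable {m : ℕ} {f a : ℕ → ℝ}

theorem le_sum_Icc_of_le_add (h0 : f 0 ≤ 0) (hstep : ∀ i < m, f (i + 1) ≤ a (i + 1) + f i) :
    ∀ i ≤ m, f i ≤ ∑ j ∈ Icc 1 i, a j := by
  intro i hi
  induction i with
  | zero => simpa using h0
  | succ i ih =>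
    rw [sum_Icc_succ_top (by omega)]
    linarith [hstep i hi, ih (by omega)]

theorem sum_Icc_add_eq_of_eq_add (hstep : ∀ i < m, f i = a (i + 1) + f (i + 1)) :
    ∀ i ≤ m, ∑ j ∈ Icc 1 i, a j + f i = f 0 := by
  intro i hi
  induction i with
  | zero => simp
  | succ i ih =>
    rw [sum_Icc_succ_top (by omega)]
    linarith [hstep i hi, ih (by omega)]

end Telescoping

theorem norm_sub_sq_add_norm_sq_of_idempotent_of_symmetric {𝕜 H : Type*} [RCLike 𝕜]
    [NormedAddCommGroup H] [InnerProductSpace 𝕜 H] {P : H → H}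
    (hPidem : ∀ x, P (P x) = P x) (hPsa : ∀ x y, inner 𝕜 (P x) y = inner 𝕜 x (P y)) (y : H) :
    ‖y - P y‖ ^ 2 + ‖P y‖ ^ 2 = ‖y‖ ^ 2 := by
  have horth : inner 𝕜 (y - P y) (P y) = 0 := by
    rw [inner_sub_left, hPsa, hPidem, sub_self]
  have h := norm_add_sq_eq_norm_sq_add_norm_sq_of_inner_eq_zero _ _ horth
  rw [sub_add_cancel] at h
  simpa only [sq] using h.symm

theorem welded_tree_ugly_bounds
    {{H : Type*}} [NormedAddCommGroup H] [InnerProductSpace ℂ H]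
    (m : ℕ) (C : ℕ → (H ≃ₗᵢ[ℂ] H))
    (P : H →L[ℂ] H)
    (hPidem : ∀ x : H, P (P x) = P x)
    (hPsa : ∀ x y : H, (inner ℂ (P x) y : ℂ) = inner ℂ x (P y))
    (ψ0 : H) (hψ0 : ‖ψ0‖ = 1) (hψ0bad : P ψ0 = 0)
    (A good bad ugly : ℕ → H)
    (hA0 : A 0 = ψ0)
    (hA : ∀ i : ℕ, 1 ≤ i → i ≤ m → A i = C i (A (i - 1)))
    (hgood0 : good 0 = ψ0) (hbad0 : bad 0 = 0) (hugly0 : ugly 0 = 0)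
    (hgood : ∀ i : ℕ, 1 ≤ i → i ≤ m →
      good i = C i (good (i - 1)) - P (C i (good (i - 1))))
    (hbad : ∀ i : ℕ, 1 ≤ i → i ≤ m → bad i = P (C i (good (i - 1))))
    (hugly : ∀ i : ℕ, 1 ≤ i → i ≤ m → ugly i = bad i + C i (ugly (i - 1))) :
    ∀ i : ℕ, i ≤ m →
      ‖ugly i‖ ≤ ∑ j ∈ Finset.Icc 1 i, ‖bad j‖ ∧
      ‖ugly i‖ ^ 2 ≤ (i : ℝ) * (1 - ‖good i‖ ^ 2) := by
  have hgood_step : ∀ k < m, ‖good k‖ ^ 2 = ‖bad (k + 1)‖ ^ 2 + ‖good (k + 1)‖ ^ 2 := by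
    intro k hk
    rw [hgood (k + 1) (by omega) hk, hbad (k + 1) (by omega) hk, Nat.add_sub_cancel, add_comm,
      norm_sub_sq_add_norm_sq_of_idempotent_of_symmetric hPidem hPsa, LinearIsometryEquiv.norm_map]
  have hugly_step : ∀ k < m, ‖ugly (k + 1)‖ ≤ ‖bad (k + 1)‖ + ‖ugly k‖ := by
    intro k hk
    rw [hugly (k + 1) (by omega) hk, Nat.add_sub_cancel, ← (C (k + 1)).norm_map (ugly k)]
    exact norm_add_le _ _
  intro i hi
  have hugly_le : ‖ugly i‖ ≤ ∑ j ∈ Icc 1 i, ‖bad j‖ :=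
    le_sum_Icc_of_le_add (f := fun k => ‖ugly k‖) (by simp [hugly0]) hugly_step i hi
  have hbad_sq : ∑ j ∈ Icc 1 i, ‖bad j‖ ^ 2 = 1 - ‖good i‖ ^ 2 := by
    have h := sum_Icc_add_eq_of_eq_add (f := fun k => ‖good k‖ ^ 2)
      (a := fun k => ‖bad k‖ ^ 2) hgood_step i hi
    rw [hgood0, hψ0, one_pow] at h
    linarith
  refine ⟨hugly_le, ?_⟩
  calc ‖ugly i‖ ^ 2 ≤ (∑ j ∈ Icc 1 i, ‖bad j‖) ^ 2 := by gcongr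
    _ ≤ #(Icc 1 i) * ∑ j ∈ Icc 1 i, ‖bad j‖ ^ 2 := sq_sum_le_card_mul_sum_sq
    _ = i * (1 - ‖good i‖ ^ 2) := by rw [hbad_sq, Nat.card_Icc, Nat.add_sub_cancel]
end

section
/- Let (H, C_1,…,C_m, Π_bad, ψ0) and (H', C'_1,…,C'_m, Π'_bad, ψ0') be two instances of the good/bad/ugly setting with the same number of gates m, with associated sequences A^i, good^i, bad^i, ugly^i and A'^i, good'^i, bad'^i, ugly'^i respectively. Suppose ‖good^i‖ = ‖good'^i‖ for every 0 ≤ i ≤ m, and suppose δ ≥ 0 is such that ‖Π'_bad A'^i‖² ≤ δ for every 0 ≤ i ≤ m. Then ‖Π_bad A^m‖² ≤ 2 m² √δ. -/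
/-!
Writing `A = good + ugly`, Pythagoras for `Π_bad` gives `‖bad^i‖² = ‖good^{i-1}‖² - ‖good^i‖²`,
so the bad norms of the two systems agree, their squares sum to at most `‖ψ0‖² = 1`, and the
final bad amplitude is at most `S = ∑ ‖bad^i‖`. In the primed system, expanding
`ugly'^i = bad'^i + C'_i ugly'^{i-1}` and using `C'_i ugly'^{i-1} = A'^i - C'_i good'^{i-1}` gives
`‖ugly'^i‖² ≤ ‖ugly'^{i-1}‖² - ‖bad'^i‖² + 2 √δ ‖bad'^i‖`, hence `∑ ‖bad^i‖² ≤ 2 √δ S`.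
Cauchy–Schwarz, `S² ≤ m ∑ ‖bad^i‖²`, then yields both `S ≤ m` and `S² ≤ 2 m² √δ`.
-/

open Finset

section Projection

variable {𝕜 E : Type*} [RCLike 𝕜] [NormedAddCommGroup E] [InnerProductSpace 𝕜 E]

theorem ContinuousLinearMap.exists_eq_starProjection {P : E →L[𝕜] E}
    (hidem : ∀ x, P (P x) = P x) (hsymm : ∀ x y, inner 𝕜 (P x) y = inner 𝕜 x (P y)) :
    ∃ (K : Submodule 𝕜 E) (_ : K.HasOrthogonalProjection), P = K.starProjection := by
  obtain ⟨K, hK, hP⟩ := LinearMap.isSymmetricProjection_iff_eq_coe_starProjection.mp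
    (⟨LinearMap.ext hidem, hsymm⟩ : (P : E →ₗ[𝕜] E).IsSymmetricProjection)
  exact ⟨K, hK, ContinuousLinearMap.coe_injective hP⟩

namespace Submodule

variable (K : Submodule 𝕜 E) [K.HasOrthogonalProjection]

theorem starProjection_starProjection (x : E) :
    K.starProjection (K.starProjection x) = K.starProjection x :=
  starProjection_eq_self_iff.mpr (K.starProjection_apply_mem x)

theorem inner_starProjection_left_eq_inner_starProjection (y a : E) :
    inner 𝕜 (K.starProjection y) a = inner 𝕜 (K.starProjection y) (K.starProjection a) := by
  conv_lhs => rw [← K.starProjection_starProjection y]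
  exact K.inner_starProjection_left_eq_right _ _

theorem norm_starProjection_add_sub_sq_le (y a : E) :
    ‖K.starProjection y + (a - y)‖ ^ 2 ≤
      ‖a - y‖ ^ 2 - ‖K.starProjection y‖ ^ 2 +
        2 * ‖K.starProjection y‖ * ‖K.starProjection a‖ := by
  have hcross : RCLike.re (inner 𝕜 (K.starProjection y) (a - y)) ≤
      ‖K.starProjection y‖ * ‖K.starProjection a‖ - ‖K.starProjection y‖ ^ 2 := by
    rw [inner_sub_right, map_sub, K.inner_starProjection_left_eq_inner_starProjection y a,
      K.inner_starProjection_left_eq_inner_starProjection y y, inner_self_eq_norm_sq]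
    linarith [re_inner_le_norm (𝕜 := 𝕜) (K.starProjection y) (K.starProjection a)]
  rw [norm_add_sq (𝕜 := 𝕜)]
  linarith

end Submodule

end Projection

theorem sq_sum_le_of_sum_sq_le {ι : Type*} (t : Finset ι) {f : ι → ℝ} {s : ℝ}
    (hf : ∀ j ∈ t, 0 ≤ f j) (hs : 0 ≤ s) (hsq : ∑ j ∈ t, f j ^ 2 ≤ 1)
    (hsq_le : ∑ j ∈ t, f j ^ 2 ≤ 2 * s * ∑ j ∈ t, f j) :
    (∑ j ∈ t, f j) ^ 2 ≤ 2 * (#t : ℝ) ^ 2 * s := by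
  have hcs : (∑ j ∈ t, f j) ^ 2 ≤ #t * ∑ j ∈ t, f j ^ 2 := sq_sum_le_card_mul_sum_sq
  have hsum : 0 ≤ ∑ j ∈ t, f j := sum_nonneg hf
  have hcard : (#t : ℝ) ≤ (#t : ℝ) ^ 2 := by
    exact_mod_cast Nat.le_self_pow two_ne_zero #t
  have hsum_le : ∑ j ∈ t, f j ≤ #t := by
    refine (pow_le_pow_iff_left₀ hsum (Nat.cast_nonneg _) two_ne_zero).mp ?_
    nlinarith
  calc (∑ j ∈ t, f j) ^ 2 ≤ #t * (2 * s * ∑ j ∈ t, f j) := by nlinarith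
    _ ≤ #t * (2 * s * #t) := by gcongr
    _ = 2 * (#t : ℝ) ^ 2 * s := by ring

section GoodBadUgly

variable {𝕜 H H' : Type*} [RCLike 𝕜] [NormedAddCommGroup H] [InnerProductSpace 𝕜 H]
  [NormedAddCommGroup H'] [InnerProductSpace 𝕜 H']

structure IsGoodBadUgly (K : Submodule 𝕜 H) [K.HasOrthogonalProjection] (m : ℕ)
    (C : ℕ → H →ₗᵢ[𝕜] H) (A good bad ugly : ℕ → H) : Prop where
  good_zero : good 0 = A 0
  ugly_zero : ugly 0 = 0
  A_succ : ∀ i < m, A (i + 1) = C (i + 1) (A i)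
  good_succ : ∀ i < m,
    good (i + 1) = C (i + 1) (good i) - K.starProjection (C (i + 1) (good i))
  bad_succ : ∀ i < m, bad (i + 1) = K.starProjection (C (i + 1) (good i))
  ugly_succ : ∀ i < m, ugly (i + 1) = bad (i + 1) + C (i + 1) (ugly i)

namespace IsGoodBadUgly

variable {K : Submodule 𝕜 H} [K.HasOrthogonalProjection] {m : ℕ} {C : ℕ → H →ₗᵢ[𝕜] H}
  {A good bad ugly : ℕ → H}

theorem of_pred (hgood0 : good 0 = A 0) (hugly0 : ugly 0 = 0)
    (hA : ∀ i : ℕ, 1 ≤ i → i ≤ m → A i = C i (A (i - 1)))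
    (hgood : ∀ i : ℕ, 1 ≤ i → i ≤ m →
      good i = C i (good (i - 1)) - K.starProjection (C i (good (i - 1))))
    (hbad : ∀ i : ℕ, 1 ≤ i → i ≤ m → bad i = K.starProjection (C i (good (i - 1))))
    (hugly : ∀ i : ℕ, 1 ≤ i → i ≤ m → ugly i = bad i + C i (ugly (i - 1))) :
    IsGoodBadUgly K m C A good bad ugly where
  good_zero := hgood0
  ugly_zero := hugly0
  A_succ i hi := hA (i + 1) (by omega) hi
  good_succ i hi := hgood (i + 1) (by omega) hi
  bad_succ i hi := hbad (i + 1) (by omega) hi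
  ugly_succ i hi := hugly (i + 1) (by omega) hi

variable (h : IsGoodBadUgly K m C A good bad ugly)
include h

theorem eq_good_add_ugly : ∀ i ≤ m, A i = good i + ugly i
  | 0, _ => by rw [h.good_zero, h.ugly_zero, add_zero]
  | i + 1, hi => by
    rw [h.A_succ i hi, eq_good_add_ugly i (Nat.le_of_lt hi), map_add, h.ugly_succ i hi,
      h.good_succ i hi, h.bad_succ i hi]
    abel

theorem norm_bad_succ_sq {i : ℕ} (hi : i < m) :
    ‖bad (i + 1)‖ ^ 2 = ‖good i‖ ^ 2 - ‖good (i + 1)‖ ^ 2 := by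
  have hpyth := K.norm_sq_eq_add_norm_sq_starProjection (C (i + 1) (good i))
  rw [K.starProjection_orthogonal_val, ← h.good_succ i hi, ← h.bad_succ i hi,
    LinearIsometry.norm_map] at hpyth
  linarith

theorem norm_good_sq_add_sum_norm_bad_sq :
    ∀ i ≤ m, ‖good i‖ ^ 2 + ∑ j ∈ range i, ‖bad (j + 1)‖ ^ 2 = ‖A 0‖ ^ 2
  | 0, _ => by rw [h.good_zero, sum_range_zero, add_zero]
  | i + 1, hi => by
    rw [sum_range_succ, h.norm_bad_succ_sq hi,
      ← norm_good_sq_add_sum_norm_bad_sq i (Nat.le_of_lt hi)]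
    ring

theorem sum_norm_bad_sq_le_norm_sq : ∑ j ∈ range m, ‖bad (j + 1)‖ ^ 2 ≤ ‖A 0‖ ^ 2 := by
  linarith [h.norm_good_sq_add_sum_norm_bad_sq m le_rfl, sq_nonneg ‖good m‖]

theorem norm_ugly_le_sum_norm_bad : ∀ i ≤ m, ‖ugly i‖ ≤ ∑ j ∈ range i, ‖bad (j + 1)‖
  | 0, _ => by rw [h.ugly_zero, norm_zero, sum_range_zero]
  | i + 1, hi => by
    rw [h.ugly_succ i hi, sum_range_succ, add_comm _ ‖bad (i + 1)‖]
    refine (norm_add_le _ _).trans ?_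
    rw [LinearIsometry.norm_map]
    gcongr
    exact norm_ugly_le_sum_norm_bad i (Nat.le_of_lt hi)

theorem norm_ugly_succ_sq_le {i : ℕ} (hi : i < m) :
    ‖ugly (i + 1)‖ ^ 2 ≤ ‖ugly i‖ ^ 2 - ‖bad (i + 1)‖ ^ 2 +
      2 * ‖bad (i + 1)‖ * ‖K.starProjection (A (i + 1))‖ := by
  have hCugly : C (i + 1) (ugly i) = A (i + 1) - C (i + 1) (good i) := by
    rw [h.A_succ i hi, h.eq_good_add_ugly i (Nat.le_of_lt hi), map_add, add_sub_cancel_left]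
  have hstep := K.norm_starProjection_add_sub_sq_le (C (i + 1) (good i)) (A (i + 1))
  rwa [← hCugly, ← h.bad_succ i hi, ← h.ugly_succ i hi, LinearIsometry.norm_map] at hstep

theorem sum_norm_bad_sq_le {s : ℝ} (hs : ∀ i ≤ m, ‖K.starProjection (A i)‖ ≤ s) :
    ∑ j ∈ range m, ‖bad (j + 1)‖ ^ 2 ≤ 2 * s * ∑ j ∈ range m, ‖bad (j + 1)‖ := by
  suffices key : ∀ i ≤ m, ‖ugly i‖ ^ 2 + ∑ j ∈ range i, ‖bad (j + 1)‖ ^ 2 ≤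
      2 * s * ∑ j ∈ range i, ‖bad (j + 1)‖ by
    linarith [key m le_rfl, sq_nonneg ‖ugly m‖]
  intro i hi
  induction i with
  | zero => simp [h.ugly_zero]
  | succ i ih =>
    have hbad_le := mul_le_mul_of_nonneg_left (hs (i + 1) hi) (norm_nonneg (bad (i + 1)))
    rw [sum_range_succ, sum_range_succ, mul_add]
    linarith [ih (by omega), h.norm_ugly_succ_sq_le hi]

theorem norm_starProjection_le_sum_norm_bad (h0 : K.starProjection (A 0) = 0) :
    ‖K.starProjection (A m)‖ ≤ ∑ j ∈ range m, ‖bad (j + 1)‖ := by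
  have hgood : K.starProjection (good m) = 0 := by
    cases m with
    | zero => rwa [h.good_zero]
    | succ i =>
      rw [h.good_succ i i.lt_succ_self, map_sub, K.starProjection_starProjection, sub_self]
  rw [h.eq_good_add_ugly m le_rfl, map_add, hgood, zero_add]
  exact (K.norm_starProjection_apply_le _).trans (h.norm_ugly_le_sum_norm_bad m le_rfl)

theorem norm_bad_eq_of_norm_good_eq {K' : Submodule 𝕜 H'} [K'.HasOrthogonalProjection]
    {C' : ℕ → H' →ₗᵢ[𝕜] H'} {A' good' bad' ugly' : ℕ → H'}
    (h' : IsGoodBadUgly K' m C' A' good' bad' ugly')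
    (hnorm : ∀ i ≤ m, ‖good i‖ = ‖good' i‖) {i : ℕ} (hi : i < m) :
    ‖bad (i + 1)‖ = ‖bad' (i + 1)‖ := by
  have hsq := h.norm_bad_succ_sq hi
  rw [hnorm i (Nat.le_of_lt hi), hnorm (i + 1) hi, ← h'.norm_bad_succ_sq hi] at hsq
  exact (sq_eq_sq₀ (norm_nonneg _) (norm_nonneg _)).mp hsq

end IsGoodBadUgly

end GoodBadUgly

theorem welded_tree_transcript_simulation_bound_general
    {H : Type*} [NormedAddCommGroup H] [InnerProductSpace ℂ H]
    {H' : Type*} [NormedAddCommGroup H'] [InnerProductSpace ℂ H']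
    (m : ℕ)
    -- the unprimed system
    (C : ℕ → (H ≃ₗᵢ[ℂ] H))
    (P : H →L[ℂ] H)
    (hPidem : ∀ x : H, P (P x) = P x)
    (hPsa : ∀ x y : H, (inner ℂ (P x) y : ℂ) = inner ℂ x (P y))
    (ψ0 : H) (hψ0 : ‖ψ0‖ = 1) (hψ0bad : P ψ0 = 0)
    (A good bad ugly : ℕ → H)
    (hA0 : A 0 = ψ0)
    (hA : ∀ i : ℕ, 1 ≤ i → i ≤ m → A i = C i (A (i - 1)))
    (hgood0 : good 0 = ψ0) (hugly0 : ugly 0 = 0)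
    (hgood : ∀ i : ℕ, 1 ≤ i → i ≤ m →
      good i = C i (good (i - 1)) - P (C i (good (i - 1))))
    (hbad : ∀ i : ℕ, 1 ≤ i → i ≤ m → bad i = P (C i (good (i - 1))))
    (hugly : ∀ i : ℕ, 1 ≤ i → i ≤ m → ugly i = bad i + C i (ugly (i - 1)))
    -- the primed system
    (C' : ℕ → (H' ≃ₗᵢ[ℂ] H'))
    (P' : H' →L[ℂ] H')
    (hPidem' : ∀ x : H', P' (P' x) = P' x)
    (hPsa' : ∀ x y : H', (inner ℂ (P' x) y : ℂ) = inner ℂ x (P' y))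
    (ψ0' : H')
    (A' good' bad' ugly' : ℕ → H')
    (hA0' : A' 0 = ψ0')
    (hA' : ∀ i : ℕ, 1 ≤ i → i ≤ m → A' i = C' i (A' (i - 1)))
    (hgood0' : good' 0 = ψ0') (hugly0' : ugly' 0 = 0)
    (hgood' : ∀ i : ℕ, 1 ≤ i → i ≤ m →
      good' i = C' i (good' (i - 1)) - P' (C' i (good' (i - 1))))
    (hbad' : ∀ i : ℕ, 1 ≤ i → i ≤ m → bad' i = P' (C' i (good' (i - 1))))
    (hugly' : ∀ i : ℕ, 1 ≤ i → i ≤ m → ugly' i = bad' i + C' i (ugly' (i - 1)))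
    -- the comparison hypotheses
    (hnorm : ∀ i : ℕ, i ≤ m → ‖good i‖ = ‖good' i‖)
    (δ : ℝ)
    (hδbound : ∀ i : ℕ, i ≤ m → ‖P' (A' i)‖ ^ 2 ≤ δ) :
    ‖P (A m)‖ ^ 2 ≤ 2 * (m : ℝ) ^ 2 * Real.sqrt δ := by
  obtain ⟨K, _, rfl⟩ := P.exists_eq_starProjection hPidem hPsa
  obtain ⟨K', _, rfl⟩ := P'.exists_eq_starProjection hPidem' hPsa'
  have hsys : IsGoodBadUgly K m (fun i => (C i).toLinearIsometry) A good bad ugly :=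
    .of_pred (hgood0.trans hA0.symm) hugly0 hA hgood hbad hugly
  have hsys' : IsGoodBadUgly K' m (fun i => (C' i).toLinearIsometry) A' good' bad' ugly' :=
    .of_pred (hgood0'.trans hA0'.symm) hugly0' hA' hgood' hbad' hugly'
  have hbad_eq : ∀ j ∈ range m, ‖bad' (j + 1)‖ = ‖bad (j + 1)‖ := fun j hj =>
    (hsys.norm_bad_eq_of_norm_good_eq hsys' hnorm (mem_range.mp hj)).symm
  have hsq : ∑ j ∈ range m, ‖bad (j + 1)‖ ^ 2 ≤ 1 := by
    simpa [hA0, hψ0] using hsys.sum_norm_bad_sq_le_norm_sq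
  have hsq_le : ∑ j ∈ range m, ‖bad (j + 1)‖ ^ 2 ≤
      2 * Real.sqrt δ * ∑ j ∈ range m, ‖bad (j + 1)‖ := by
    have hsys'_le := hsys'.sum_norm_bad_sq_le fun i hi =>
      (le_abs_self _).trans (Real.abs_le_sqrt (hδbound i hi))
    rwa [sum_congr rfl hbad_eq, sum_congr rfl fun j hj => congrArg (· ^ 2) (hbad_eq j hj)]
      at hsys'_le
  calc ‖K.starProjection (A m)‖ ^ 2 ≤ (∑ j ∈ range m, ‖bad (j + 1)‖) ^ 2 := by
        gcongr
        exact hsys.norm_starProjection_le_sum_norm_bad (by rw [hA0, hψ0bad])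
    _ ≤ 2 * (m : ℝ) ^ 2 * Real.sqrt δ := by
        simpa using sq_sum_le_of_sum_sq_le (range m) (fun _ _ => norm_nonneg _)
          (Real.sqrt_nonneg δ) hsq hsq_le

theorem welded_tree_transcript_simulation_bound
    {H : Type*} [NormedAddCommGroup H] [InnerProductSpace ℂ H]
    {H' : Type*} [NormedAddCommGroup H'] [InnerProductSpace ℂ H']
    (m : ℕ)
    -- the unprimed system
    (C : ℕ → (H ≃ₗᵢ[ℂ] H))
    (P : H →L[ℂ] H)
    (hPidem : ∀ x : H, P (P x) = P x)
    (hPsa : ∀ x y : H, (inner ℂ (P x) y : ℂ) = inner ℂ x (P y))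
    (ψ0 : H) (hψ0 : ‖ψ0‖ = 1) (hψ0bad : P ψ0 = 0)
    (A good bad ugly : ℕ → H)
    (hA0 : A 0 = ψ0)
    (hA : ∀ i : ℕ, 1 ≤ i → i ≤ m → A i = C i (A (i - 1)))
    (hgood0 : good 0 = ψ0) (hbad0 : bad 0 = 0) (hugly0 : ugly 0 = 0)
    (hgood : ∀ i : ℕ, 1 ≤ i → i ≤ m →
      good i = C i (good (i - 1)) - P (C i (good (i - 1))))
    (hbad : ∀ i : ℕ, 1 ≤ i → i ≤ m → bad i = P (C i (good (i - 1))))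
    (hugly : ∀ i : ℕ, 1 ≤ i → i ≤ m → ugly i = bad i + C i (ugly (i - 1)))
    -- the primed system
    (C' : ℕ → (H' ≃ₗᵢ[ℂ] H'))
    (P' : H' →L[ℂ] H')
    (hPidem' : ∀ x : H', P' (P' x) = P' x)
    (hPsa' : ∀ x y : H', (inner ℂ (P' x) y : ℂ) = inner ℂ x (P' y))
    (ψ0' : H') (hψ0' : ‖ψ0'‖ = 1) (hψ0bad' : P' ψ0' = 0)
    (A' good' bad' ugly' : ℕ → H')
    (hA0' : A' 0 = ψ0')
    (hA' : ∀ i : ℕ, 1 ≤ i → i ≤ m → A' i = C' i (A' (i - 1)))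
    (hgood0' : good' 0 = ψ0') (hbad0' : bad' 0 = 0) (hugly0' : ugly' 0 = 0)
    (hgood' : ∀ i : ℕ, 1 ≤ i → i ≤ m →
      good' i = C' i (good' (i - 1)) - P' (C' i (good' (i - 1))))
    (hbad' : ∀ i : ℕ, 1 ≤ i → i ≤ m → bad' i = P' (C' i (good' (i - 1))))
    (hugly' : ∀ i : ℕ, 1 ≤ i → i ≤ m → ugly' i = bad' i + C' i (ugly' (i - 1)))
    -- the comparison hypotheses
    (hnorm : ∀ i : ℕ, i ≤ m → ‖good i‖ = ‖good' i‖)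
    (δ : ℝ) (hδ : 0 ≤ δ)
    (hδbound : ∀ i : ℕ, i ≤ m → ‖P' (A' i)‖ ^ 2 ≤ δ) :
    ‖P (A m)‖ ^ 2 ≤ 2 * (m : ℝ) ^ 2 * Real.sqrt δ :=
  welded_tree_transcript_simulation_bound_general m C P hPidem hPsa ψ0 hψ0 hψ0bad A good bad ugly
    hA0 hA hgood0 hugly0 hgood hbad hugly C' P' hPidem' hPsa' ψ0' A' good' bad' ugly' hA0' hA'
    hgood0' hugly0' hgood' hbad' hugly' hnorm δ hδbound
end
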